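/- Let F be a field with pairwise distinct ζ₁,...,ζ₆. For the left-hand side of the 3→3 move (4-simplices 12345, 12346, 12356), every x-chain is a cycle under g₄ in the trivial sense that there are no inner edges; moreover, every x-chain (x_{u,p}) on this configuration lies in the image of the extended map g₃ applied to a chain supported on all (inner and boundary) tetrahedra: i.e., the F-linear map from F^{tetrahedra of the configuration} to E₁₂₃₄₅ ⊕ E₁₂₃₄₆ ⊕ E₁₂₃₅₆ sending e_t to Σ_{u ⊃ t} e_{u, u\t} is surjective. -/
import Mathlib


noncomputable section

variable (F : Type*) [Field F] (ζ : Fin 6 → F)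

/-- The 4-simplices of the left-hand side of the 3→3 move (0-indexed). -/
def A : Finset (Fin 6) := {0, 1, 2, 3, 4}
def B : Finset (Fin 6) := {0, 1, 2, 3, 5}
def C : Finset (Fin 6) := {0, 1, 2, 4, 5}

/-- Vertices of the three 4-simplices in increasing order. -/
def vA : Fin 5 → Fin 6 := ![0, 1, 2, 3, 4]
def vB : Fin 5 → Fin 6 := ![0, 1, 2, 3, 5]
def vC : Fin 5 → Fin 6 := ![0, 1, 2, 4, 5]

/-- Tetrahedra of the configuration: 4-element subsets contained in one of the three
4-simplices. -/
abbrev Tet : Type := {t : Finset (Fin 6) // t.card = 4 ∧ (t ⊆ A ∨ t ⊆ B ∨ t ⊆ C)}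

/-- `E_u = F⁵ / span{(1,…,1), (ζ_i,…,ζ_m)}` for a 4-simplex `u` with vertex list `w`. -/
abbrev E (w : Fin 5 → Fin 6) :=
  (Fin 5 → F) ⧸ Submodule.span F {(fun _ => (1 : F)), (fun p => ζ (w p))}

/-- The coefficient vector in the 4-simplex with vertex list `w` (underlying set `u`)
of the extended `g₃` applied to a tetrahedron chain `c`: at the vertex `w p`, the value of
`c` on the face `u \ {w p}`. -/
def g3coeff (u : Finset (Fin 6)) (w : Fin 5 → Fin 6) (c : Tet → F) : Fin 5 → F :=
  fun p => ∑ t : Tet, if t.1 = u.erase (w p) then c t else 0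

def mkChain (x : Fin 12 → F) : Tet → F := fun t =>
  if t.1 = {1,2,3,4} then x 0 else
  if t.1 = {0,2,3,4} then x 1 else
  if t.1 = {0,1,3,4} then x 2 else
  if t.1 = {0,1,2,4} then x 3 else
  if t.1 = {0,1,2,3} then x 4 else
  if t.1 = {1,2,3,5} then x 5 else
  if t.1 = {0,2,3,5} then x 6 else
  if t.1 = {0,1,3,5} then x 7 else
  if t.1 = {0,1,2,5} then x 8 else
  if t.1 = {1,2,4,5} then x 9 else
  if t.1 = {0,2,4,5} then x 10 else
  if t.1 = {0,1,4,5} then x 11 else 0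

theorem tet_sum (f : Tet → F) (s : Finset (Fin 6))
    (hs : s.card = 4 ∧ (s ⊆ A ∨ s ⊆ B ∨ s ⊆ C)) :
    (∑ t : Tet, if t.1 = s then f t else 0) = f ⟨s, hs⟩ := by
  have h : ∀ t : Tet, (t.1 = s) = (t = ⟨s, hs⟩) := fun t =>
    propext ⟨fun h => Subtype.ext h, fun h => by rw [h]⟩
  simp_rw [h]
  simp

theorem g3coeff_eq (u : Finset (Fin 6)) (w : Fin 5 → Fin 6) (c : Tet → F) (p : Fin 5)
    (s : Finset (Fin 6)) (hs : s.card = 4 ∧ (s ⊆ A ∨ s ⊆ B ∨ s ⊆ C))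
    (h : u.erase (w p) = s) : g3coeff F u w c p = c ⟨s, hs⟩ := by
  simp only [g3coeff, h]
  exact tet_sum F c s hs


/-- Example 2 of the paper: on the left-hand-side configuration of the 3→3 move
(no inner edges, so every x-chain is a cycle), every x-chain is in the image of the
extended `g₃` from chains on all (inner and boundary) tetrahedra: the linear map
`F^{tetrahedra} → E₁₂₃₄₅ ⊕ E₁₂₃₄₆ ⊕ E₁₂₃₅₆`, `e_t ↦ Σ_{u ⊇ t} e_{u, u∖t}`, is surjective. -/
theorem extended_g3_surjective (hζ : Function.Injective ζ) :
    Function.Surjective (fun c : Tet → F =>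
      ((Submodule.Quotient.mk (g3coeff F A vA c) : E F ζ vA),
       (Submodule.Quotient.mk (g3coeff F B vB c) : E F ζ vB),
       (Submodule.Quotient.mk (g3coeff F C vC c) : E F ζ vC))) := by
  rintro ⟨x, y, z⟩
  obtain ⟨a, rfl⟩ := Submodule.Quotient.mk_surjective _ x
  obtain ⟨b, rfl⟩ := Submodule.Quotient.mk_surjective _ y
  obtain ⟨g, rfl⟩ := Submodule.Quotient.mk_surjective _ z
  have h45 : ζ 4 - ζ 5 ≠ 0 := sub_ne_zero.mpr (fun h => absurd (hζ h) (by decide))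
  set αB : F := b 4 - a 4 with hαB
  set s5 : F := b 3 - αB with hs5
  set βC : F := ((g 3 - s5) - (g 4 - a 3)) / (ζ 4 - ζ 5) with hβC
  set αC : F := g 3 - s5 - βC * ζ 4 with hαC
  have hβ : βC * (ζ 4 - ζ 5) = (g 3 - s5) - (g 4 - a 3) := div_mul_cancel₀ _ h45
  set cc : Tet → F := mkChain F
    ![a 0, a 1, a 2, a 3, a 4, b 0 - αB, b 1 - αB, b 2 - αB, b 3 - αB,
      g 0 - αC - βC * ζ 0, g 1 - αC - βC * ζ 1, g 2 - αC - βC * ζ 2] with hcc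
  refine ⟨cc, ?_⟩
  have hA : g3coeff F A vA cc = a := by
    funext p
    fin_cases p
    · exact (g3coeff_eq F _ _ cc 0 {1,2,3,4} ⟨by decide, Or.inl (by decide)⟩ (by decide)).trans (by rw [hcc]; rfl)
    · exact (g3coeff_eq F _ _ cc 1 {0,2,3,4} ⟨by decide, Or.inl (by decide)⟩ (by decide)).trans (by rw [hcc]; rfl)
    · exact (g3coeff_eq F _ _ cc 2 {0,1,3,4} ⟨by decide, Or.inl (by decide)⟩ (by decide)).trans (by rw [hcc]; rfl)
    · exact (g3coeff_eq F _ _ cc 3 {0,1,2,4} ⟨by decide, Or.inl (by decide)⟩ (by decide)).trans (by rw [hcc]; rfl)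
    · exact (g3coeff_eq F _ _ cc 4 {0,1,2,3} ⟨by decide, Or.inl (by decide)⟩ (by decide)).trans (by rw [hcc]; rfl)
  have hB : g3coeff F B vB cc = fun p => b p - αB := by
    funext p
    fin_cases p
    · exact (g3coeff_eq F _ _ cc 0 {1,2,3,5} ⟨by decide, Or.inr (Or.inl (by decide))⟩ (by decide)).trans (by rw [hcc]; rfl)
    · exact (g3coeff_eq F _ _ cc 1 {0,2,3,5} ⟨by decide, Or.inr (Or.inl (by decide))⟩ (by decide)).trans (by rw [hcc]; rfl)
    · exact (g3coeff_eq F _ _ cc 2 {0,1,3,5} ⟨by decide, Or.inr (Or.inl (by decide))⟩ (by decide)).trans (by rw [hcc]; rfl)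
    · exact (g3coeff_eq F _ _ cc 3 {0,1,2,5} ⟨by decide, Or.inr (Or.inl (by decide))⟩ (by decide)).trans (by rw [hcc]; rfl)
    · refine (g3coeff_eq F _ _ cc 4 {0,1,2,3} ⟨by decide, Or.inl (by decide)⟩ (by decide)).trans ?_
      rw [hcc]; show a 4 = b 4 - αB
      rw [hαB]; ring
  have hC : g3coeff F C vC cc = fun p => g p - αC - βC * ζ (vC p) := by
    funext p
    fin_cases p
    · exact (g3coeff_eq F _ _ cc 0 {1,2,4,5} ⟨by decide, Or.inr (Or.inr (by decide))⟩ (by decide)).trans (by rw [hcc]; rfl)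
    · exact (g3coeff_eq F _ _ cc 1 {0,2,4,5} ⟨by decide, Or.inr (Or.inr (by decide))⟩ (by decide)).trans (by rw [hcc]; rfl)
    · exact (g3coeff_eq F _ _ cc 2 {0,1,4,5} ⟨by decide, Or.inr (Or.inr (by decide))⟩ (by decide)).trans (by rw [hcc]; rfl)
    · refine (g3coeff_eq F _ _ cc 3 {0,1,2,5} ⟨by decide, Or.inr (Or.inl (by decide))⟩ (by decide)).trans ?_
      rw [hcc]; show b 3 - αB = g 3 - αC - βC * ζ (vC 3)
      have : vC 3 = 4 := by decide
      rw [this, hαC, hs5]; ring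
    · refine (g3coeff_eq F _ _ cc 4 {0,1,2,4} ⟨by decide, Or.inl (by decide)⟩ (by decide)).trans ?_
      rw [hcc]; show a 3 = g 4 - αC - βC * ζ (vC 4)
      have h4 : vC 4 = 5 := by decide
      rw [h4, hαC]
      linear_combination -hβ
  refine Prod.ext ?_ (Prod.ext ?_ ?_)
  · show (Submodule.Quotient.mk (g3coeff F A vA cc) : E F ζ vA) = Submodule.Quotient.mk a
    rw [hA]
  · show (Submodule.Quotient.mk (g3coeff F B vB cc) : E F ζ vB) = Submodule.Quotient.mk b
    rw [hB, Submodule.Quotient.eq]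
    have : ((fun p => b p - αB) - b) = (-αB) • (fun _ => (1 : F)) := by
      funext p; simp only [Pi.sub_apply, Pi.smul_apply, Pi.add_apply, smul_eq_mul]; ring
    rw [this]
    exact Submodule.smul_mem _ _ (Submodule.subset_span (Set.mem_insert _ _))
  · show (Submodule.Quotient.mk (g3coeff F C vC cc) : E F ζ vC) = Submodule.Quotient.mk g
    rw [hC, Submodule.Quotient.eq]
    have : ((fun p => g p - αC - βC * ζ (vC p)) - g)
        = (-αC) • (fun _ => (1 : F)) + (-βC) • (fun p => ζ (vC p)) := by
      funext p; simp only [Pi.sub_apply, Pi.smul_apply, Pi.add_apply, smul_eq_mul]; ring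
    rw [this]
    exact Submodule.add_mem _
      (Submodule.smul_mem _ _ (Submodule.subset_span (Set.mem_insert _ _)))
      (Submodule.smul_mem _ _ (Submodule.subset_span (Set.mem_insert_of_mem _ rfl)))

end
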